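/- Let Λ ∈ ℝ^{2n×2n} be symmetric positive semidefinite with n×n blocks Λ₁₁ (top-left), Λ₁₂ (top-right), Λ₁₂ᵀ, Λ₂₂ (bottom-right), and let Λ₀ ∈ ℝ^{n×n} be symmetric positive semidefinite with Λ₂₂ + Λ₀ ≠ 0. Then λ_min( Λ + blockdiag(0, Λ₀) ) ≥ (1/2) · λ_min(Λ₀) · min{ 1, λ_min(Λ₁₁) / (2 ‖Λ₂₂ + Λ₀‖) }. -/

import Mathlib

/-!
Write a unit vector as `v = (x, y)` and put `u = ‖y‖²`, `c = λ_min(Λ₀)`, `s = ‖Λ₂₂ + Λ₀‖`,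
`t = min 1 (λ_min(Λ₁₁) / 2s)`. The quadratic form of the perturbed matrix is at least `yᵀΛ₀y ≥ c u`,
which settles the case `u ≥ t / 2`. Otherwise `x` carries most of the mass, and the parallelogram
law for the PSD form of `Λ`, applied to `v ± (0, y)`, gives
`vᵀΛv ≥ xᵀΛ₁₁x / 2 - yᵀΛ₂₂y ≥ λ_min(Λ₁₁)(1 - u) / 2 - yᵀΛ₂₂y`; together with
`yᵀ(Λ₂₂ + Λ₀)y ≤ s u` and `c ≤ s` this is again at least `c t / 2`.
-/

open Matrix

/-- The ℓ²→ℓ² operator norm (largest singular value) of a real matrix. -/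
noncomputable def opN {k l : Type*} [Fintype k] [Fintype l] [DecidableEq l]
    (M : Matrix k l ℝ) : ℝ :=
  ‖LinearMap.toContinuousLinearMap (Matrix.toEuclideanLin M)‖

/-- The smallest eigenvalue of a symmetric real matrix, as the infimum of the
Rayleigh quotient over the unit sphere. -/
noncomputable def lamMin {k : Type*} [Fintype k] (M : Matrix k k ℝ) : ℝ :=
  sInf {r : ℝ | ∃ v : k → ℝ, v ⬝ᵥ v = 1 ∧ r = v ⬝ᵥ M.mulVec v}

open scoped RealInnerProductSpace

namespace Matrix

variable {k l : Type*} [Fintype k] [Fintype l]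

theorem dotProduct_mulVec_add_add_sub (M : Matrix k k ℝ) (p w : k → ℝ) :
    (p + w) ⬝ᵥ M *ᵥ (p + w) + (p - w) ⬝ᵥ M *ᵥ (p - w) =
      2 * (p ⬝ᵥ M *ᵥ p) + 2 * (w ⬝ᵥ M *ᵥ w) := by
  simp only [mulVec_add, mulVec_sub, add_dotProduct, sub_dotProduct, dotProduct_add,
    dotProduct_sub]
  ring

theorem sumElim_dotProduct_mulVec_fromBlocks (A : Matrix k k ℝ) (B : Matrix k l ℝ)
    (C : Matrix l k ℝ) (D : Matrix l l ℝ) (x : k → ℝ) (y : l → ℝ) :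
    (x ⊕ᵥ y) ⬝ᵥ fromBlocks A B C D *ᵥ (x ⊕ᵥ y) =
      x ⬝ᵥ A *ᵥ x + x ⬝ᵥ B *ᵥ y + y ⬝ᵥ C *ᵥ x + y ⬝ᵥ D *ᵥ y := by
  simp only [fromBlocks_mulVec, sumElim_dotProduct_sumElim, Sum.elim_comp_inl, Sum.elim_comp_inr,
    dotProduct_add]
  ring

namespace PosSemidef

theorem dotProduct_mulVec_nonneg' {M : Matrix k k ℝ} (hM : M.PosSemidef) (v : k → ℝ) :
    0 ≤ v ⬝ᵥ M *ᵥ v := by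
  simpa using hM.dotProduct_mulVec_nonneg v

theorem half_dotProduct_mulVec_sub_le {M : Matrix k k ℝ} (hM : M.PosSemidef) (p w : k → ℝ) :
    (p - w) ⬝ᵥ M *ᵥ (p - w) / 2 - w ⬝ᵥ M *ᵥ w ≤ p ⬝ᵥ M *ᵥ p := by
  linarith [dotProduct_mulVec_add_add_sub M p w, hM.dotProduct_mulVec_nonneg' (p + w)]

theorem half_toBlocks₁₁_sub_toBlocks₂₂_le {Λ : Matrix (k ⊕ l) (k ⊕ l) ℝ} (hΛ : Λ.PosSemidef)
    (x : k → ℝ) (y : l → ℝ) :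
    x ⬝ᵥ Λ.toBlocks₁₁ *ᵥ x / 2 - y ⬝ᵥ Λ.toBlocks₂₂ *ᵥ y ≤ (x ⊕ᵥ y) ⬝ᵥ Λ *ᵥ (x ⊕ᵥ y) := by
  have hblocks (x' : k → ℝ) (y' : l → ℝ) := fromBlocks_toBlocks Λ ▸
    sumElim_dotProduct_mulVec_fromBlocks Λ.toBlocks₁₁ Λ.toBlocks₁₂ Λ.toBlocks₂₁ Λ.toBlocks₂₂ x' y'
  have h := hΛ.half_dotProduct_mulVec_sub_le (x ⊕ᵥ y) (0 ⊕ᵥ y)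
  rw [← Sum.elim_sub_sub, sub_zero, sub_self, hblocks x 0, hblocks 0 y] at h
  simpa using h

theorem lamMin_le {M : Matrix k k ℝ} (hM : M.PosSemidef) {v : k → ℝ} (hv : v ⬝ᵥ v = 1) :
    lamMin M ≤ v ⬝ᵥ M *ᵥ v :=
  csInf_le ⟨0, by rintro _ ⟨w, -, rfl⟩; exact hM.dotProduct_mulVec_nonneg' w⟩ ⟨v, hv, rfl⟩

theorem lamMin_nonneg {M : Matrix k k ℝ} (hM : M.PosSemidef) : 0 ≤ lamMin M :=
  Real.sInf_nonneg <| by rintro _ ⟨w, -, rfl⟩; exact hM.dotProduct_mulVec_nonneg' w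

theorem lamMin_mul_le {M : Matrix k k ℝ} (hM : M.PosSemidef) (x : k → ℝ) :
    lamMin M * (x ⬝ᵥ x) ≤ x ⬝ᵥ M *ᵥ x := by
  rcases eq_or_ne x 0 with rfl | hx
  · simp
  have hxx : 0 < x ⬝ᵥ x := by simpa using dotProduct_star_self_pos_iff.2 hx
  set c := √(x ⬝ᵥ x)
  have hc : 0 < c := Real.sqrt_pos.2 hxx
  have hc2 : c ^ 2 = x ⬝ᵥ x := Real.sq_sqrt hxx.le
  have hunit : (c⁻¹ • x) ⬝ᵥ (c⁻¹ • x) = 1 := by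
    rw [smul_dotProduct, dotProduct_smul, smul_eq_mul, smul_eq_mul, ← hc2]
    field_simp
  have h := hM.lamMin_le hunit
  rw [mulVec_smul, smul_dotProduct, dotProduct_smul, smul_eq_mul, smul_eq_mul] at h
  calc lamMin M * (x ⬝ᵥ x) ≤ c⁻¹ * (c⁻¹ * (x ⬝ᵥ M *ᵥ x)) * c ^ 2 := by rw [← hc2]; gcongr
    _ = x ⬝ᵥ M *ᵥ x := by field_simp

end PosSemidef

theorem exists_dotProduct_self_eq_one [Nonempty k] : ∃ v : k → ℝ, v ⬝ᵥ v = 1 := by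
  classical
  obtain ⟨i⟩ := ‹Nonempty k›
  exact ⟨Pi.single i 1, by simp⟩

theorem le_lamMin [Nonempty k] {M : Matrix k k ℝ} {r : ℝ}
    (h : ∀ v : k → ℝ, v ⬝ᵥ v = 1 → r ≤ v ⬝ᵥ M *ᵥ v) : r ≤ lamMin M := by
  obtain ⟨e, he⟩ := exists_dotProduct_self_eq_one (k := k)
  exact le_csInf ⟨_, e, he, rfl⟩ (by rintro _ ⟨v, hv, rfl⟩; exact h v hv)

open scoped Matrix.Norms.L2Operator

theorem opN_eq_l2_opNorm [DecidableEq l] (M : Matrix k l ℝ) : opN M = ‖M‖ := rfl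

theorem opN_pos [DecidableEq l] {M : Matrix k l ℝ} (hM : M ≠ 0) : 0 < opN M := by
  rw [opN_eq_l2_opNorm]
  exact norm_pos_iff.2 hM

theorem dotProduct_mulVec_le_opN_mul [DecidableEq k] (M : Matrix k k ℝ) (y : k → ℝ) :
    y ⬝ᵥ M *ᵥ y ≤ opN M * (y ⬝ᵥ y) := by
  set Y : EuclideanSpace ℝ k := WithLp.toLp 2 y
  set T := toEuclideanCLM (n := k) (𝕜 := ℝ) M
  have hY : ‖Y‖ ^ 2 = y ⬝ᵥ y := by
    rw [EuclideanSpace.real_norm_sq_eq]; simp [Y, dotProduct, sq]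
  calc y ⬝ᵥ M *ᵥ y = ⟪Y, T Y⟫ := (inner_toEuclideanCLM M Y Y).symm
    _ ≤ ‖Y‖ * ‖T Y‖ := real_inner_le_norm _ _
    _ ≤ ‖Y‖ * (‖T‖ * ‖Y‖) := by gcongr; exact T.le_opNorm Y
    _ = opN M * (y ⬝ᵥ y) := by rw [← hY, opN_eq_l2_opNorm, ← l2_opNorm_toEuclideanCLM]; ring

theorem lamMin_le_opN_add [Nonempty k] [DecidableEq k] {A B : Matrix k k ℝ} (hA : A.PosSemidef)
    (hB : B.PosSemidef) : lamMin B ≤ opN (A + B) := by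
  obtain ⟨e, he⟩ := exists_dotProduct_self_eq_one (k := k)
  calc lamMin B ≤ e ⬝ᵥ B *ᵥ e := hB.lamMin_le he
    _ ≤ e ⬝ᵥ (A + B) *ᵥ e := by
      rw [add_mulVec, dotProduct_add]; linarith [hA.dotProduct_mulVec_nonneg' e]
    _ ≤ opN (A + B) := by simpa [he] using dotProduct_mulVec_le_opN_mul (A + B) e

end Matrix

theorem half_mul_min_le {a c s u q : ℝ} (hs : 0 < s) (ha : 0 ≤ a) (hc : 0 ≤ c) (hcs : c ≤ s)
    (hu : 0 ≤ u) (hq₁ : c * u ≤ q) (hq₂ : a * (1 - u) / 2 - s * u + 2 * c * u ≤ q) :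
    1 / 2 * c * min 1 (a / (2 * s)) ≤ q := by
  set t := min 1 (a / (2 * s))
  have ht : t ≤ 1 := min_le_left _ _
  have hst : s * t ≤ a / 2 :=
    calc s * t ≤ s * (a / (2 * s)) := by gcongr; exact min_le_right _ _
      _ = a / 2 := by field_simp
  rcases le_or_gt (t / 2) u with hu' | hu'
  · nlinarith [mul_le_mul_of_nonneg_left hu' hc]
  · nlinarith [mul_nonneg ha (by linarith : (0 : ℝ) ≤ 1 / 2 - u),
      mul_nonneg (sub_nonneg.2 hcs) (by linarith : (0 : ℝ) ≤ t / 2 - u), mul_nonneg hc hu]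

/-- Lower bound on the smallest eigenvalue of a PSD block matrix
perturbed by a PSD matrix in the (2,2)-block. -/
theorem stmt_15 {n : ℕ} (Λ : Matrix (Fin n ⊕ Fin n) (Fin n ⊕ Fin n) ℝ)
    (hΛ : Λ.PosSemidef)
    (Λ₀ : Matrix (Fin n) (Fin n) ℝ) (hΛ₀ : Λ₀.PosSemidef)
    (hne : Λ.toBlocks₂₂ + Λ₀ ≠ 0) :
    (1 / 2) * lamMin Λ₀ *
        min 1 (lamMin Λ.toBlocks₁₁ / (2 * opN (Λ.toBlocks₂₂ + Λ₀))) ≤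
      lamMin (Λ + Matrix.fromBlocks 0 0 0 Λ₀) := by
  have : Nonempty (Fin n) := by
    rcases n with _ | n
    · exact absurd (Subsingleton.elim _ _) hne
    · exact ⟨0⟩
  have hΛ₁₁ : Λ.toBlocks₁₁.PosSemidef := hΛ.submatrix Sum.inl
  have hΛ₂₂ : Λ.toBlocks₂₂.PosSemidef := hΛ.submatrix Sum.inr
  refine le_lamMin fun v hv => ?_
  obtain ⟨x, y, rfl⟩ : ∃ x y, v = x ⊕ᵥ y :=
    ⟨v ∘ Sum.inl, v ∘ Sum.inr, (Sum.elim_comp_inl_inr v).symm⟩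
  have hxx : x ⬝ᵥ x = 1 - y ⬝ᵥ y := by rw [sumElim_dotProduct_sumElim] at hv; linarith
  have hsplit : (x ⊕ᵥ y) ⬝ᵥ (Λ + fromBlocks 0 0 0 Λ₀) *ᵥ (x ⊕ᵥ y) =
      (x ⊕ᵥ y) ⬝ᵥ Λ *ᵥ (x ⊕ᵥ y) + y ⬝ᵥ Λ₀ *ᵥ y := by
    simp [add_mulVec, dotProduct_add, sumElim_dotProduct_mulVec_fromBlocks]
  have hx : lamMin Λ.toBlocks₁₁ * (1 - y ⬝ᵥ y) ≤ x ⬝ᵥ Λ.toBlocks₁₁ *ᵥ x :=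
    hxx ▸ hΛ₁₁.lamMin_mul_le x
  have hy₀ := hΛ₀.lamMin_mul_le y
  have hy_opN := dotProduct_mulVec_le_opN_mul (Λ.toBlocks₂₂ + Λ₀) y
  rw [add_mulVec, dotProduct_add] at hy_opN
  refine half_mul_min_le (opN_pos hne) hΛ₁₁.lamMin_nonneg hΛ₀.lamMin_nonneg
    (lamMin_le_opN_add hΛ₂₂ hΛ₀) (by simpa using dotProduct_star_self_nonneg y) ?_ ?_ <;>
    rw [hsplit]
  · linarith [hΛ.dotProduct_mulVec_nonneg' (x ⊕ᵥ y)]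
  · linarith [hΛ.half_toBlocks₁₁_sub_toBlocks₂₂_le x y]
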